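/- arXiv:1705.05531 — 6 statements merged into one kernel-verified Lean document; each statement's English description precedes it below -/
import Mathlib

section
/- (Lemma 2.3, first part) Let P = {σ_1, …, σ_s} be a simplicial complement of a simplicial complex K on the vertex set [m], and let σ be a simplex of K. Then P − σ = {σ_1 \ σ, …, σ_s \ σ} is a simplicial complement of link_K σ on the vertex set [m] \ σ; that is, K_{P−σ}([m] \ σ) = link_K σ. -/
/-- The vertex set `[m] = {1, …, m}`. -/
def vertexSet (m : ℕ) : Finset ℕ := Finset.Icc 1 m

/-- The simplicial complex recovered from a collection `P` of subsets on the vertex set `I`: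
`K_P(I) = {τ ⊆ I : no σ ∈ P satisfies σ ⊆ τ}`. -/
def recover (P : Set (Finset ℕ)) (I : Finset ℕ) : Set (Finset ℕ) :=
  {τ | τ ⊆ I ∧ ∀ s ∈ P, ¬ s ⊆ τ}

/-- `K` is an abstract simplicial complex on the vertex set `[m]`: every simplex is a
subset of `[m]` and every subset of a simplex is a simplex. -/
def IsSimplicialComplex (m : ℕ) (K : Set (Finset ℕ)) : Prop :=
  (∀ τ ∈ K, τ ⊆ vertexSet m) ∧ ∀ τ ∈ K, ∀ s, s ⊆ τ → s ∈ K

/-- The set of missing faces of `K` on `[m]`: subsets of `[m]` that are not simplices of `K`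
but all of whose proper subsets are simplices of `K`. -/
def missingFaces (m : ℕ) (K : Set (Finset ℕ)) : Set (Finset ℕ) :=
  {σ | σ ⊆ vertexSet m ∧ σ ∉ K ∧ ∀ τ, τ ⊂ σ → τ ∈ K}

/-- `P − σ = {s \ σ : s ∈ P}`. -/
def complementDiff (P : Set (Finset ℕ)) (σ : Finset ℕ) : Set (Finset ℕ) :=
  (fun s => s \ σ) '' P

/-- The join `P₁ * P₂ = {s ∪ t : s ∈ P₁, t ∈ P₂}`. -/
def complementJoin (P₁ P₂ : Set (Finset ℕ)) : Set (Finset ℕ) :=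
  Set.image2 (· ∪ ·) P₁ P₂

/-- `link_K σ = {τ ∈ K : σ ∪ τ ∈ K and σ ∩ τ = ∅}`. -/
def linkC (K : Set (Finset ℕ)) (σ : Finset ℕ) : Set (Finset ℕ) :=
  {τ ∈ K | σ ∪ τ ∈ K ∧ σ ∩ τ = ∅}

/-- `star_K σ = {τ ∈ K : σ ∪ τ ∈ K}`. -/
def starC (K : Set (Finset ℕ)) (σ : Finset ℕ) : Set (Finset ℕ) :=
  {τ ∈ K | σ ∪ τ ∈ K}

/-- `Intstar_K σ = {τ ∈ K : σ ⊆ τ}`. -/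
def intStarC (K : Set (Finset ℕ)) (σ : Finset ℕ) : Set (Finset ℕ) :=
  {τ ∈ K | σ ⊆ τ}

/-- `∂star_K σ = star_K σ \ Intstar_K σ`. -/
def bdStarC (K : Set (Finset ℕ)) (σ : Finset ℕ) : Set (Finset ℕ) :=
  starC K σ \ intStarC K σ

/-- The cone on `L` with apex `v`: `cone(L) = L ∪ {τ ∪ {v} : τ ∈ L}`. -/
def coneC (v : ℕ) (L : Set (Finset ℕ)) : Set (Finset ℕ) :=
  L ∪ (fun τ => τ ∪ {v}) '' L

/-- Lemma 2.3, first part: if `P` is a simplicial complement of `K` on `[m]`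
and `σ ∈ K`, then `P − σ` is a simplicial complement of `link_K σ` on `[m] \ σ`. -/
theorem stmt3 (m : ℕ) (K P : Set (Finset ℕ)) (σ : Finset ℕ)
    (hK : IsSimplicialComplex m K)
    (hPsub : ∀ s ∈ P, s ⊆ vertexSet m)
    (hP : recover P (vertexSet m) = K)
    (hσ : σ ∈ K) :
    recover (complementDiff P σ) (vertexSet m \ σ) = linkC K σ := by
  ext τ
  constructor
  · rintro ⟨hτ, hns⟩
    have hdisj : σ ∩ τ = ∅ := by
      apply Finset.eq_empty_of_forall_notMem
      intro x hx
      simp only [Finset.mem_inter] at hx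
      have := hτ hx.2
      simp only [Finset.mem_sdiff] at this
      exact this.2 hx.1
    have hστ : σ ∪ τ ∈ K := by
      rw [← hP]
      refine ⟨Finset.union_subset (hK.1 σ hσ) ?_, ?_⟩
      · intro x hx; exact (Finset.mem_sdiff.mp (hτ hx)).1
      · intro s hs hsub
        apply hns (s \ σ) ⟨s, hs, rfl⟩
        intro x hx
        simp only [Finset.mem_sdiff] at hx
        rcases Finset.mem_union.mp (hsub hx.1) with h | h
        · exact absurd h hx.2
        · exact h
    exact ⟨hK.2 _ hστ τ Finset.subset_union_right, hστ, hdisj⟩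
  · rintro ⟨hτK, hστ, hdisj⟩
    refine ⟨?_, ?_⟩
    · intro x hx
      simp only [Finset.mem_sdiff]
      refine ⟨hK.1 τ hτK hx, fun hxσ => ?_⟩
      exact Finset.notMem_empty x (hdisj ▸ Finset.mem_inter.mpr ⟨hxσ, hx⟩)
    · rintro _ ⟨s, hs, rfl⟩ hsub
      rw [← hP] at hστ
      apply hστ.2 s hs
      intro x hx
      by_cases hxσ : x ∈ σ
      · exact Finset.mem_union_left _ hxσ
      · exact Finset.mem_union_right _ (hsub (Finset.mem_sdiff.mpr ⟨hx, hxσ⟩))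
end

section
/- (Lemma 2.3, second part) Let P = {σ_1, …, σ_s} be a simplicial complement of a simplicial complex K on the vertex set [m], and let σ be a simplex of K. Then, regarded as a collection of subsets of [m], P − σ = {σ_1 \ σ, …, σ_s \ σ} is a simplicial complement of star_K σ on [m]; that is, K_{P−σ}([m]) = star_K σ. -/
/-- Lemma 2.3, second part: if `P` is a simplicial complement of `K` on `[m]`
and `σ ∈ K`, then `P − σ`, regarded on `[m]`, is a simplicial complement of `star_K σ`. -/
theorem stmt4 (m : ℕ) (K P : Set (Finset ℕ)) (σ : Finset ℕ)
    (hK : IsSimplicialComplex m K)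
    (hPsub : ∀ s ∈ P, s ⊆ vertexSet m)
    (hP : recover P (vertexSet m) = K)
    (hσ : σ ∈ K) :
    recover (complementDiff P σ) (vertexSet m) = starC K σ := by
  obtain ⟨hKsub, hKdown⟩ := hK
  ext τ
  constructor
  · rintro ⟨hτm, hτ⟩
    have hστ : σ ∪ τ ∈ K := by
      rw [← hP]
      refine ⟨Finset.union_subset (hKsub σ hσ) hτm, fun s hs hsub => ?_⟩
      exact hτ (s \ σ) ⟨s, hs, rfl⟩ fun x hx => by
        have := hsub (Finset.mem_sdiff.mp hx).1
        rcases Finset.mem_union.mp this with h | h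
        · exact absurd h (Finset.mem_sdiff.mp hx).2
        · exact h
    exact ⟨hKdown _ hστ τ Finset.subset_union_right, hστ⟩
  · rintro ⟨hτK, hστ⟩
    refine ⟨hKsub τ hτK, ?_⟩
    rintro _ ⟨s, hs, rfl⟩ hsub
    rw [← hP] at hστ
    exact hστ.2 s hs fun x hx => by
      by_cases hxσ : x ∈ σ
      · exact Finset.mem_union_left _ hxσ
      · exact Finset.mem_union_right _ (hsub (Finset.mem_sdiff.mpr ⟨hx, hxσ⟩))
end

section
/- (Claim in the proof of Theorem 2.7) Let P be a simplicial complement of a simplicial complex K on the vertex set [m], and let σ be a simplex of K. Then the collection {σ} ∪ (P − σ) is a simplicial complement of the boundary of the star, ∂star_K σ = star_K σ \ Intstar_K σ, on the vertex set [m]; that is, K_{{σ} ∪ (P−σ)}([m]) = ∂star_K σ. -/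
/-- claim in the proof of Theorem 2.7: `{σ} ∪ (P − σ)` is a simplicial
complement of `∂star_K σ = star_K σ \ Intstar_K σ` on `[m]`. -/
theorem stmt8 (m : ℕ) (K P : Set (Finset ℕ)) (σ : Finset ℕ)
    (hK : IsSimplicialComplex m K)
    (hPsub : ∀ s ∈ P, s ⊆ vertexSet m)
    (hP : recover P (vertexSet m) = K)
    (hσ : σ ∈ K) :
    recover ({σ} ∪ complementDiff P σ) (vertexSet m) = bdStarC K σ := by
  have hσm : σ ⊆ vertexSet m := hK.1 σ hσ
  ext τ
  constructor
  · rintro ⟨hτm, hall⟩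
    have hnσ : ¬ σ ⊆ τ := by
      intro h
      exact hall σ (Or.inl rfl) h
    have hστ : σ ∪ τ ∈ K := by
      rw [← hP]
      refine ⟨Finset.union_subset hσm hτm, ?_⟩
      intro s hs hsub
      exact hall (s \ σ) (Or.inr ⟨s, hs, rfl⟩) (sdiff_le_iff.mpr hsub)
    have hτK : τ ∈ K := hK.2 _ hστ τ Finset.subset_union_right
    exact ⟨⟨hτK, hστ⟩, fun h => hnσ h.2⟩
  · rintro ⟨⟨hτK, hστ⟩, hni⟩
    have hnσ : ¬ σ ⊆ τ := fun h => hni ⟨hτK, h⟩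
    refine ⟨hK.1 τ hτK, ?_⟩
    rintro s (rfl | ⟨t, ht, rfl⟩) hsub
    · exact hnσ hsub
    · have : t ⊆ σ ∪ τ := sdiff_le_iff.mp hsub
      rw [← hP] at hστ
      exact hστ.2 t ht this
end

section
/- (Claim in the proof of Theorem 2.7) Let P be a simplicial complement of a simplicial complex K on the vertex set [m], and let σ be a simplex of K. Then the collection {σ} ∪ (P − σ), regarded as a collection of subsets of [m+1], is a simplicial complement of the cone cone(∂star_K σ) with apex m+1; that is, K_{{σ} ∪ (P−σ)}([m+1]) = ∂star_K σ ∪ {τ ∪ {m+1} : τ ∈ ∂star_K σ}. -/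
/-- claim in the proof of Theorem 2.7: `{σ} ∪ (P − σ)`, regarded on `[m+1]`,
is a simplicial complement of the cone on `∂star_K σ` with apex `m+1`. -/
theorem stmt10 (m : ℕ) (K P : Set (Finset ℕ)) (σ : Finset ℕ)
    (hK : IsSimplicialComplex m K)
    (hPsub : ∀ s ∈ P, s ⊆ vertexSet m)
    (hP : recover P (vertexSet m) = K)
    (hσ : σ ∈ K) :
    recover ({σ} ∪ complementDiff P σ) (vertexSet (m + 1)) =
      coneC (m + 1) (bdStarC K σ) := by
  obtain ⟨hKsub, hKdown⟩ := hK
  have hmm : vertexSet m ⊆ vertexSet (m + 1) :=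
    Finset.Icc_subset_Icc_right (Nat.le_succ m)
  have hσK : σ ⊆ vertexSet m := hKsub σ hσ
  ext τ
  constructor
  · rintro ⟨hτI, hforb⟩
    have hσnot : ¬ σ ⊆ τ := hforb σ (Or.inl rfl)
    have hPτ : ∀ s ∈ P, ¬ s \ σ ⊆ τ := fun s hs => hforb (s \ σ) (Or.inr ⟨s, hs, rfl⟩)
    set τ' := τ \ {m + 1} with hτ'
    have hτ'τ : τ' ⊆ τ := Finset.sdiff_subset
    have hτ'sub : τ' ⊆ vertexSet m := by
      intro x hx
      rw [hτ', Finset.mem_sdiff, Finset.mem_singleton] at hx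
      have := hτI hx.1
      simp [vertexSet, Finset.mem_Icc] at this ⊢
      omega
    have hunion : σ ∪ τ' ∈ K := by
      rw [← hP]
      refine ⟨Finset.union_subset hσK hτ'sub, ?_⟩
      intro s hs hss
      refine hPτ s hs (fun x hx => ?_)
      rw [Finset.mem_sdiff] at hx
      have := hss hx.1
      rw [Finset.mem_union] at this
      exact hτ'τ (this.resolve_left hx.2)
    have hτ'K : τ' ∈ K := hKdown _ hunion τ' Finset.subset_union_right
    have hbd : τ' ∈ bdStarC K σ := by
      refine ⟨⟨hτ'K, hunion⟩, fun h => hσnot (h.2.trans hτ'τ)⟩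
    by_cases hm : (m + 1) ∈ τ
    · right
      exact ⟨τ', hbd, by
        simp only [hτ']
        rw [Finset.sdiff_union_self_eq_union]
        exact Finset.union_eq_left.mpr (Finset.singleton_subset_iff.mpr hm)⟩
    · left
      have : τ' = τ := by
        rw [hτ', Finset.sdiff_eq_self_iff_disjoint, Finset.disjoint_singleton_right]
        exact hm
      rwa [← this]
  · rintro (hτ | ⟨τ₀, hτ₀, rfl⟩)
    · obtain ⟨⟨hτK, hστ⟩, hns⟩ := hτ
      have hσnot : ¬ σ ⊆ τ := fun h => hns ⟨hτK, h⟩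
      refine ⟨(hKsub τ hτK).trans hmm, ?_⟩
      rintro s (rfl | ⟨t, ht, rfl⟩)
      · exact hσnot
      · intro hsub
        rw [← hP] at hστ
        refine hστ.2 t ht (fun x hx => ?_)
        rw [Finset.mem_union]
        by_cases hxσ : x ∈ σ
        · exact Or.inl hxσ
        · exact Or.inr (hsub (Finset.mem_sdiff.mpr ⟨hx, hxσ⟩))
    · obtain ⟨⟨hτK, hστ⟩, hns⟩ := hτ₀
      have hσnot : ¬ σ ⊆ τ₀ := fun h => hns ⟨hτK, h⟩
      have hm1 : ∀ x ∈ vertexSet m, x ≠ m + 1 := by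
        intro x hx
        simp [vertexSet, Finset.mem_Icc] at hx
        omega
      constructor
      · exact Finset.union_subset ((hKsub τ₀ hτK).trans hmm)
          (by simp [vertexSet, Finset.mem_Icc])
      · rintro s (rfl | ⟨t, ht, rfl⟩)
        · intro hsub
          refine hσnot (fun x hx => ?_)
          have := hsub hx
          rw [Finset.mem_union, Finset.mem_singleton] at this
          exact this.resolve_right (hm1 x (hσK hx))
        · intro hsub
          rw [← hP] at hστ
          refine hστ.2 t ht (fun x hx => ?_)
          rw [Finset.mem_union]
          by_cases hxσ : x ∈ σ
          · exact Or.inl hxσ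
          · have := hsub (Finset.mem_sdiff.mpr ⟨hx, hxσ⟩)
            rw [Finset.mem_union, Finset.mem_singleton] at this
            exact Or.inr (this.resolve_right (hm1 x (hPsub t ht hx)))
end

section
/- (Theorem 2.7) Let P = {σ_1, …, σ_s} be a simplicial complement of a simplicial complex K on the vertex set [m], and let σ be a simplex of K. Then the collection P ∪ {σ} ∪ ((P − σ) * {m+1}) = P ∪ {σ} ∪ {(σ_1 \ σ) ∪ {m+1}, …, (σ_s \ σ) ∪ {m+1}} is a simplicial complement on the vertex set [m+1] of the stellar subdivision ss_σ K = (K \ Intstar_K σ) ∪ cone(∂star_K σ); that is, K_{P ∪ {σ} ∪ ((P−σ)*{m+1})}([m+1]) = ss_σ K. -/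
/-- Theorem 2.7: if `P` is a simplicial complement of `K` on `[m]` and
`σ ∈ K`, then `P ∪ {σ} ∪ ((P − σ) * {m+1})` is a simplicial complement on `[m+1]` of the
stellar subdivision `ss_σ K = (K \ Intstar_K σ) ∪ cone(∂star_K σ)`. -/
theorem stmt12 (m : ℕ) (K P : Set (Finset ℕ)) (σ : Finset ℕ)
    (hK : IsSimplicialComplex m K)
    (hPsub : ∀ s ∈ P, s ⊆ vertexSet m)
    (hP : recover P (vertexSet m) = K)
    (hσ : σ ∈ K) :
    recover (P ∪ {σ} ∪ ((fun s => s \ σ ∪ {m + 1}) '' P)) (vertexSet (m + 1)) =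
      (K \ intStarC K σ) ∪ coneC (m + 1) (bdStarC K σ) := by
  obtain ⟨hKsub, hKdown⟩ := hK
  have hm1 : (m+1) ∉ vertexSet m := by simp [vertexSet]
  have hvs : vertexSet m ⊆ vertexSet (m+1) := Finset.Icc_subset_Icc le_rfl (Nat.le_succ m)
  have hm1' : (m+1) ∈ vertexSet (m+1) := by simp [vertexSet]
  have hσm : σ ⊆ vertexSet m := hKsub σ hσ
  have key : ∀ A B : Finset ℕ, A ⊆ vertexSet m → A ⊆ B ∪ {m+1} → A ⊆ B := by
    intro A B hA h x hx
    rcases Finset.mem_union.1 (h hx) with h1 | h1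
    · exact h1
    · simp only [Finset.mem_singleton] at h1
      exact absurd (hA hx) (h1 ▸ hm1)
  have case1 : ∀ τ, τ ∈ K → ¬ σ ⊆ τ →
      τ ∈ recover (P ∪ {σ} ∪ ((fun s => s \ σ ∪ {m + 1}) '' P)) (vertexSet (m + 1)) := by
    intro τ hτK hστ
    have hτm : τ ⊆ vertexSet m := hKsub τ hτK
    have hτP : ∀ s ∈ P, ¬ s ⊆ τ := by
      rw [← hP] at hτK; exact hτK.2
    refine ⟨hτm.trans hvs, ?_⟩
    rintro s ((hs | hs) | ⟨t, ht, rfl⟩)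
    · exact hτP s hs
    · rw [Set.mem_singleton_iff] at hs; subst hs; exact hστ
    · intro hsub
      have : m+1 ∈ τ := hsub (by simp)
      exact hm1 (hτm this)
  ext τ
  constructor
  · rintro ⟨hτI, hmem⟩
    have hP1 : ∀ s ∈ P, ¬ s ⊆ τ := fun s hs => hmem s (Or.inl (Or.inl hs))
    have hσn : ¬ σ ⊆ τ := hmem σ (Or.inl (Or.inr rfl))
    have hP2 : ∀ s ∈ P, ¬ (s \ σ ∪ {m+1}) ⊆ τ := fun s hs => hmem _ (Or.inr ⟨s, hs, rfl⟩)
    by_cases h1 : m+1 ∈ τ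
    · set ρ := τ.erase (m+1) with hρ
      have hρm : ρ ⊆ vertexSet m := by
        intro x hx
        have hx' := hτI (Finset.mem_of_mem_erase hx)
        have hne := Finset.ne_of_mem_erase hx
        simp only [vertexSet, Finset.mem_Icc] at hx' ⊢
        exact ⟨hx'.1, by omega⟩
      have hτρ : τ = ρ ∪ {m+1} := by
        rw [hρ]; ext x
        simp only [Finset.mem_union, Finset.mem_erase, Finset.mem_singleton]
        constructor
        · intro hx; by_cases hxe : x = m+1
          · exact Or.inr hxe
          · exact Or.inl ⟨hxe, hx⟩
        · rintro (⟨_, hx⟩ | rfl)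
          · exact hx
          · exact h1
      have hσρK : σ ∪ ρ ∈ K := by
        rw [← hP]
        refine ⟨Finset.union_subset hσm hρm, ?_⟩
        intro s hs hsub
        apply hP2 s hs
        rw [hτρ]
        apply Finset.union_subset_union _ (Finset.Subset.refl _)
        intro x hx
        rcases Finset.mem_union.1 (hsub (Finset.mem_sdiff.1 hx).1) with h2 | h2
        · exact absurd h2 (Finset.mem_sdiff.1 hx).2
        · exact h2
      have hρK : ρ ∈ K := hKdown _ hσρK ρ Finset.subset_union_right
      have hσρn : ¬ σ ⊆ ρ := fun h => hσn (h.trans (Finset.erase_subset _ _))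
      exact Or.inr (Or.inr ⟨ρ, ⟨⟨hρK, hσρK⟩, fun h => hσρn h.2⟩, hτρ.symm⟩)
    · have hτm : τ ⊆ vertexSet m := by
        intro x hx
        have hx' := hτI hx
        simp only [vertexSet, Finset.mem_Icc] at hx' ⊢
        refine ⟨hx'.1, ?_⟩
        rcases Nat.lt_or_ge x (m+1) with h | h
        · omega
        · exact absurd (by omega : x = m+1) (fun he => h1 (he ▸ hx))
      have hτK : τ ∈ K := by rw [← hP]; exact ⟨hτm, hP1⟩
      exact Or.inl ⟨hτK, fun h => hσn h.2⟩
  · rintro (⟨hτK, hτn⟩ | hc)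
    · exact case1 τ hτK (fun h => hτn ⟨hτK, h⟩)
    · rcases hc with hτbd | ⟨ρ, hρbd, rfl⟩
      · exact case1 τ hτbd.1.1 (fun h => hτbd.2 ⟨hτbd.1.1, h⟩)
      · obtain ⟨⟨hρK, hσρK⟩, hρn⟩ := hρbd
        have hσρn : ¬ σ ⊆ ρ := fun h => hρn ⟨hρK, h⟩
        have hρm : ρ ⊆ vertexSet m := hKsub ρ hρK
        have hrec : ∀ s ∈ P, ¬ s ⊆ σ ∪ ρ := by
          rw [← hP] at hσρK; exact hσρK.2
        refine ⟨?_, ?_⟩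
        · intro x hx
          rcases Finset.mem_union.1 hx with h | h
          · exact hvs (hρm h)
          · simp only [Finset.mem_singleton] at h; exact h ▸ hm1'
        · rintro s ((hs | hs) | ⟨t, ht, rfl⟩)
          · intro hsub
            have hsρ : s ⊆ ρ := key s ρ (hPsub s hs) hsub
            exact hrec s hs (hsρ.trans Finset.subset_union_right)
          · rw [Set.mem_singleton_iff] at hs; subst hs
            intro hsub
            exact hσρn (key _ ρ hσm hsub)
          · intro hsub
            have h1 : t \ σ ⊆ ρ ∪ {m+1} := Finset.subset_union_left.trans hsub
            have h2 : t \ σ ⊆ ρ := key _ _ ((Finset.sdiff_subset).trans (hPsub t ht)) h1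
            refine hrec t ht (fun x hx => ?_)
            by_cases hxσ : x ∈ σ
            · exact Finset.mem_union_left _ hxσ
            · exact Finset.mem_union_right _ (h2 (Finset.mem_sdiff.2 ⟨hx, hxσ⟩))
end

section
/- (Theorem 3.2, Construction) Let K be a subcomplex of a simplicial complex L_0 on the vertex set [m] (i.e. every simplex of K is a simplex of L_0), and let M = {σ_1, σ_2, …, σ_s} be the set of missing faces of K. Form the successive stellar subdivisions L_1 = ss_{σ_1} L_0, L_2 = ss_{σ_2} L_1, …, L_s = ss_{σ_s} L_{s-1}, where at step i the complex L_i is a simplicial complex on [m+i] (and if σ_i is not a simplex of L_{i-1}, the operation just adds m+i as a ghost vertex, leaving the complex unchanged). Then K is the full subcomplex of L_s on [m]: K = (L_s)|_{[m]} = {σ ∈ L_s : σ ⊆ [m]}. -/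
/-- The stellar subdivision of `K` at `σ` with new vertex `v`:
`ss_σ K = (K \ Intstar_K σ) ∪ cone(∂star_K σ)` if `σ` is a simplex of `K`;
if `σ` is not a simplex of `K`, the complex is unchanged (`v` is a ghost vertex). -/
noncomputable def stellarC (v : ℕ) (K : Set (Finset ℕ)) (σ : Finset ℕ) : Set (Finset ℕ) :=
  @ite _ (σ ∈ K) (Classical.propDecidable _)
    ((K \ intStarC K σ) ∪ coneC v (bdStarC K σ)) K

/-- The iterated stellar subdivisions `L_0 = L0`, `L_i = ss_{σ_i} L_{i-1}`, where the
`i`-th subdivision introduces the new vertex `m + i`. -/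
noncomputable def Lseq (m : ℕ) (L0 : Set (Finset ℕ)) (σ : ℕ → Finset ℕ) :
    ℕ → Set (Finset ℕ)
  | 0 => L0
  | i + 1 => stellarC (m + (i + 1)) (Lseq m L0 σ i) (σ (i + 1))

lemma new_not_mem {m : ℕ} (i : ℕ) {τ : Finset ℕ} (hτ : τ ⊆ vertexSet m) :
    m + (i + 1) ∉ τ := by
  intro h
  have := hτ h
  simp only [vertexSet, Finset.mem_Icc] at this
  omega

lemma mem_of_mem_stellar {v : ℕ} {K : Set (Finset ℕ)} {σ τ : Finset ℕ}
    (hv : v ∉ τ) (h : τ ∈ stellarC v K σ) : τ ∈ K ∧ (σ ∈ K → ¬ σ ⊆ τ) := by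
  unfold stellarC at h
  split at h
  · rcases h with ⟨hK, hns⟩ | h
    · exact ⟨hK, fun _ hs => hns ⟨hK, hs⟩⟩
    · rcases h with h | ⟨τ', hτ', rfl⟩
      · exact ⟨h.1.1, fun _ hs => h.2 ⟨h.1.1, hs⟩⟩
      · exact absurd (Finset.mem_union_right _ (Finset.mem_singleton_self v)) hv
  · exact ⟨h, fun hσ => absurd hσ (by assumption)⟩

lemma mem_stellar_of_mem {v : ℕ} {K : Set (Finset ℕ)} {σ τ : Finset ℕ}
    (hτ : τ ∈ K) (h : σ ∈ K → ¬ σ ⊆ τ) : τ ∈ stellarC v K σ := by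
  unfold stellarC
  split
  · exact Or.inl ⟨hτ, fun hi => h (by assumption) hi.2⟩
  · exact hτ

/-- Restricted downward closedness of `Lseq` on subsets of `[m]`. -/
lemma Lseq_down {m : ℕ} {L0 : Set (Finset ℕ)} {σ : ℕ → Finset ℕ}
    (hL0 : IsSimplicialComplex m L0) :
    ∀ i, ∀ τ ρ : Finset ℕ, τ ⊆ vertexSet m → ρ ⊆ τ → τ ∈ Lseq m L0 σ i →
      ρ ∈ Lseq m L0 σ i := by
  intro i
  induction i with
  | zero => exact fun τ ρ _ hρτ hτ => hL0.2 τ hτ ρ hρτ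
  | succ i ih =>
    intro τ ρ hτm hρτ hτ
    obtain ⟨hτL, hnσ⟩ := mem_of_mem_stellar (new_not_mem i hτm) hτ
    have hρL := ih τ ρ hτm hρτ hτL
    exact mem_stellar_of_mem hρL (fun hσ hσρ => hnσ hσ (hσρ.trans hρτ))

/-- The key characterization of the full subcomplex of `Lseq` on `[m]`. -/
lemma Lseq_char {m : ℕ} {L0 : Set (Finset ℕ)} {σ : ℕ → Finset ℕ}
    (hL0 : IsSimplicialComplex m L0) :
    ∀ i, ∀ τ : Finset ℕ, τ ⊆ vertexSet m →
      (τ ∈ Lseq m L0 σ i ↔ τ ∈ L0 ∧ ∀ j, 1 ≤ j → j ≤ i → ¬ σ j ⊆ τ) := by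
  intro i
  induction i with
  | zero => exact fun τ _ => ⟨fun h => ⟨h, fun j h1 h0 => by omega⟩, fun h => h.1⟩
  | succ i ih =>
    intro τ hτm
    constructor
    · intro hτ
      obtain ⟨hτL, hnσ⟩ := mem_of_mem_stellar (new_not_mem i hτm) hτ
      obtain ⟨hτ0, hall⟩ := (ih τ hτm).1 hτL
      refine ⟨hτ0, fun j h1 h2 => ?_⟩
      rcases Nat.lt_or_ge j (i + 1) with hj | hj
      · exact hall j h1 (by omega)
      · have : j = i + 1 := by omega
        subst this
        intro hσj
        have hσm : σ (i + 1) ⊆ vertexSet m := hσj.trans hτm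
        exact hnσ (Lseq_down hL0 i τ (σ (i + 1)) hτm hσj hτL) hσj
    · rintro ⟨hτ0, hall⟩
      have hτL : τ ∈ Lseq m L0 σ i :=
        (ih τ hτm).2 ⟨hτ0, fun j h1 h2 => hall j h1 (by omega)⟩
      exact mem_stellar_of_mem hτL (fun _ => hall (i + 1) (by omega) le_rfl)

/-- Every non-face contains a missing face. -/
lemma exists_missing (m : ℕ) (K : Set (Finset ℕ)) :
    ∀ τ : Finset ℕ, τ ⊆ vertexSet m → τ ∉ K →
      ∃ ρ, ρ ∈ missingFaces m K ∧ ρ ⊆ τ := by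
  intro τ
  induction τ using Finset.strongInductionOn with
  | _ τ ih =>
    intro hτm hτK
    by_cases h : ∀ π, π ⊂ τ → π ∈ K
    · exact ⟨τ, ⟨hτm, hτK, h⟩, subset_rfl⟩
    · push_neg at h
      obtain ⟨π, hπτ, hπK⟩ := h
      obtain ⟨ρ, hρ, hρπ⟩ := ih π hπτ (hπτ.subset.trans hτm) hπK
      exact ⟨ρ, hρ, hρπ.trans hπτ.subset⟩

/-- Theorem 3.2, Construction: if `K` is a subcomplex of `L_0` on `[m]` whose
set of missing faces is `{σ_1, …, σ_s}`, then after the successive stellar subdivisions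
`L_i = ss_{σ_i} L_{i-1}`, the complex `K` is the full subcomplex of `L_s` on `[m]`. -/
theorem stmt16 (m s : ℕ) (K L0 : Set (Finset ℕ)) (σ : ℕ → Finset ℕ)
    (hK : IsSimplicialComplex m K) (hL0 : IsSimplicialComplex m L0)
    (hKL : K ⊆ L0)
    (hM : missingFaces m K = σ '' Set.Icc 1 s) :
    K = {τ ∈ Lseq m L0 σ s | τ ⊆ vertexSet m} := by
  ext τ
  constructor
  · intro hτ
    have hτm : τ ⊆ vertexSet m := hK.1 τ hτ
    refine ⟨(Lseq_char hL0 s τ hτm).2 ⟨hKL hτ, fun j h1 h2 hσj => ?_⟩, hτm⟩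
    have hmiss : σ j ∈ missingFaces m K := by
      rw [hM]; exact ⟨j, ⟨h1, h2⟩, rfl⟩
    exact hmiss.2.1 (hK.2 τ hτ (σ j) hσj)
  · rintro ⟨hτL, hτm⟩
    by_contra hτK
    obtain ⟨ρ, hρmiss, hρτ⟩ := exists_missing m K τ hτm hτK
    rw [hM] at hρmiss
    obtain ⟨j, ⟨h1, h2⟩, rfl⟩ := hρmiss
    exact ((Lseq_char hL0 s τ hτm).1 hτL).2 j h1 h2 hρτ
end
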